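/- Concreteness of reachable global traces for WHILE: if σ is a concrete well-formed state and s a WHILE statement with vars(s) ⊆ dom(σ), then for every configuration (sh', K(s')) reachable from (⟨σ⟩, K(s)) by finitely many applications of the composition rule, sh' is a concrete trace (all its states are concrete well-formed states) and vars(s') ⊆ dom(last(sh')). -/

import Mathlib

/-! # LAGC semantics: basic definitions

Program variables, values, expressions, starred expressions, symbolic states,
evaluation, concretisation, traces with events, the WHILE language with its
local evaluation (`valS`), the composition rule (`Step`), and global trace
semantics (`tracesOf`). -/

/-- Program variables. -/
abbrev Var := String

/-- Values: booleans and integers. -/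
inductive Val where
  | bool : Bool → Val
  | int  : Int → Val
deriving DecidableEq

/-- Binary operators. -/
inductive Op where
  | add | sub | mul | eqOp | lt
deriving DecidableEq

/-- Evaluation of the binary operators on values. -/
def applyOp : Op → Val → Val → Val
  | .add, .int a, .int b => .int (a + b)
  | .sub, .int a, .int b => .int (a - b)
  | .mul, .int a, .int b => .int (a * b)
  | .eqOp, a, b => .bool (decide (a = b))
  | .lt, .int a, .int b => .bool (decide (a < b))
  | _, _, _ => .int 0

/-- Expressions. -/
inductive Exp where
  | var : Var → Exp
  | val : Val → Exp
  | op  : Op → Exp → Exp → Exp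
deriving DecidableEq

/-- The set of variables occurring in an expression. -/
def Exp.vars : Exp → Set Var
  | .var x => {x}
  | .val _ => ∅
  | .op _ a b => a.vars ∪ b.vars

/-- Starred expressions: expressions extended with the symbol `∗`. -/
inductive Sexp where
  | star : Sexp
  | exp  : Exp → Sexp
deriving DecidableEq

/-- The set of variables occurring in a starred expression. -/
def Sexp.vars : Sexp → Set Var
  | .star => ∅
  | .exp e => e.vars

/-- A symbolic state: a partial map from variables to starred expressions. -/
abbrev SymState := Var → Option Sexp

/-- The domain of a symbolic state. -/
def domS (σ : SymState) : Set Var := {x | (σ x).isSome}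

/-- The symbolic variables of a state: those bound to `∗`. -/
def symbS (σ : SymState) : Set Var := {x | σ x = some .star}

/-- State update `σ[x ↦ se]`. -/
def updState (σ : SymState) (x : Var) (se : Sexp) : SymState :=
  fun y => if y = x then some se else σ y

/-- Well-formed state: every variable occurring in a value of the state is
a symbolic variable of the state. -/
def wfState (σ : SymState) : Prop :=
  ∀ y se, σ y = some se → Sexp.vars se ⊆ symbS σ

/-- Every defined variable is bound to a value (the paper's standing
assumption that states are simplified by propagation of concrete values). -/
def ValuedState (σ : SymState) : Prop :=
  ∀ x se, σ x = some se → ∃ v : Val, se = .exp (.val v)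

/-- A concrete, well-formed state: well-formed, no symbolic variables, and
(by the standing simplification assumption) every defined variable is bound
to a value. -/
def ConcreteState (σ : SymState) : Prop :=
  wfState σ ∧ symbS σ = ∅ ∧ ValuedState σ

/-- State extension `σ ⊆ σ'`. -/
def stateExtends (σ σ' : SymState) : Prop :=
  ∀ x se, σ x = some se → σ' x = some se

/-- The evaluation function `val_σ : Exp → Exp`. -/
def evalE (σ : SymState) : Exp → Exp
  | .var x =>
      match σ x with
      | some (.exp e) => e
      | _ => .var x
  | .val v => .val v
  | .op o a b =>
      match evalE σ a, evalE σ b with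
      | .val v1, .val v2 => .val (applyOp o v1 v2)
      | r1, r2 => .op o r1 r2

/-- A (partial) mapping of variables to values, viewed as a symbolic state. -/
def rhoState (ρ : Var → Option Val) : SymState :=
  fun x => (ρ x).map (fun v => .exp (.val v))

/-- Evaluation of a starred expression (`∗` is left untouched). -/
def evalSexp (σ : SymState) : Sexp → Sexp
  | .star => .star
  | .exp e => .exp (evalE σ e)

/-- `ρ` is a concretisation mapping for the state `σ`:
`dom(ρ) ∩ dom(σ) = symb(σ)`. -/
def ConcMap (ρ : Var → Option Val) (σ : SymState) : Prop :=
  {x | (ρ x).isSome} ∩ domS σ = symbS σ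

/-- The concretisation `ρ ∘ σ` of a state:
`ρ ∪ { x ↦ val_ρ(σ(x)) | x ∈ dom(σ) \ dom(ρ) }`. -/
def concretize (ρ : Var → Option Val) (σ : SymState) : SymState :=
  fun x =>
    match ρ x with
    | some v => some (.exp (.val v))
    | none => (σ x).map (evalSexp (rhoState ρ))

/-- Trace elements: symbolic states and event markers over lists of
expressions. -/
inductive TElem where
  | state : SymState → TElem
  | event : List Exp → TElem

/-- A possibly infinite symbolic trace, as a sequence of optional elements. -/
abbrev Trace := ℕ → Option TElem

/-- The finite trace given by a list, as a `Trace`. -/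
def ofList (l : List TElem) : Trace := fun n => l[n]?

/-- The states occurring in a trace. -/
def statesOf (τ : Trace) : Set SymState := {σ | ∃ n, τ n = some (.state σ)}

/-- The states occurring in a finite trace. -/
def listStates (l : List TElem) : Set SymState := {σ | TElem.state σ ∈ l}

/-- `V = ⋃_{σ ∈ τ} symb(σ)`: all symbolic variables of states of the trace. -/
def traceV (τ : Trace) : Set Var := ⋃ σ ∈ statesOf τ, symbS σ

/-- A path condition is a (finite) set of Boolean expressions; a conditioned
symbolic trace `pc ▷ τ` is well-formed if all its states are well-formed, no
variable symbolic somewhere is non-symbolic elsewhere, the path condition and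
events only mention symbolic variables of the trace, and every event is
immediately preceded and followed by one and the same state. -/
def wfTrace (pc : Set Exp) (τ : Trace) : Prop :=
  (∀ σ ∈ statesOf τ, wfState σ) ∧
  (∀ σ ∈ statesOf τ, (domS σ \ symbS σ) ∩ traceV τ = ∅) ∧
  (∀ e ∈ pc, Exp.vars e ⊆ traceV τ) ∧
  (∀ n es, τ n = some (.event es) → ∀ e ∈ es, Exp.vars e ⊆ traceV τ) ∧
  (∀ n es, τ n = some (.event es) →
    ∃ σ, 0 < n ∧ τ (n - 1) = some (.state σ) ∧ τ (n + 1) = some (.state σ))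

/-- Concretisation of a trace element. -/
def concElem (ρ : Var → Option Val) : TElem → TElem
  | .state σ => .state (concretize ρ σ)
  | .event es => .event (es.map (evalE (rhoState ρ)))

/-- Concretisation of a (possibly infinite) trace. -/
def concretizeT (ρ : Var → Option Val) (τ : Trace) : Trace :=
  fun n => (τ n).map (concElem ρ)

/-- Concretisation of a finite trace. -/
def concretizeL (ρ : Var → Option Val) (l : List TElem) : List TElem :=
  l.map (concElem ρ)

/-- `ρ` is a trace concretisation mapping for `τ`: a concretisation mapping
for every state of `τ`. -/
def TraceConcMap (ρ : Var → Option Val) (τ : Trace) : Prop :=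
  ∀ σ ∈ statesOf τ, ConcMap ρ σ

/-- `ρ` is a trace concretisation mapping for the finite trace `l`. -/
def TraceConcMapL (ρ : Var → Option Val) (l : List TElem) : Prop :=
  ∀ σ ∈ listStates l, ConcMap ρ σ

/-- Concretisation of a path condition: `val_ρ(pc)`. -/
def pcConc (ρ : Var → Option Val) (pc : Set Exp) : Set Exp :=
  (evalE (rhoState ρ)) '' pc

/-- A path condition is consistent if, fully evaluated, it does not
contain `ff`. -/
def pcConsistent (pc : Set Exp) : Prop :=
  ∀ e ∈ pc, evalE (fun _ => none) e ≠ .val (.bool false)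

/-! ## The WHILE language -/

/-- WHILE statements. -/
inductive Stmt where
  | skip   : Stmt
  | assign : Var → Exp → Stmt
  | ifS    : Exp → Stmt → Stmt
  | seq    : Stmt → Stmt → Stmt
  | whileS : Exp → Stmt → Stmt

/-- The variables of a statement. -/
def stmtVars : Stmt → Set Var
  | .skip => ∅
  | .assign x e => {x} ∪ e.vars
  | .ifS e s => e.vars ∪ stmtVars s
  | .seq a b => stmtVars a ∪ stmtVars b
  | .whileS e s => e.vars ∪ stmtVars s

/-- A conditioned continuation trace `pc ▷ τ · K(s')`; `k = none` is the
empty continuation `K(∘)`. -/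
structure CTrace where
  pc : Set Exp
  tr : List TElem
  k  : Option Stmt

/-- The Boolean expression `val_σ(e) = tt`. -/
def eqTT (σ : SymState) (e : Exp) : Exp :=
  .op .eqOp (evalE σ e) (.val (.bool true))

/-- The Boolean expression `val_σ(e) = ff`. -/
def eqFF (σ : SymState) (e : Exp) : Exp :=
  .op .eqOp (evalE σ e) (.val (.bool false))

/-- Continuation `K(r'; s)`, with the rewrite `∘; s ↝ s`. -/
def seqK : Option Stmt → Stmt → Option Stmt
  | none, s => some s
  | some r, s => some (.seq r s)

/-- Local evaluation of WHILE statements: `val_σ : Stmt → Set CTrace`.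
The `while` case is the unfolding `val_σ(while e {s}) = val_σ(if e {s; while e {s}})`. -/
def valS (σ : SymState) : Stmt → Set CTrace
  | .skip => {⟨∅, [.state σ], none⟩}
  | .assign x e =>
      {⟨∅, [.state σ, .state (updState σ x (.exp (evalE σ e)))], none⟩}
  | .ifS e s =>
      {⟨{eqTT σ e}, [.state σ], some s⟩, ⟨{eqFF σ e}, [.state σ], none⟩}
  | .whileS e s =>
      {⟨{eqTT σ e}, [.state σ], some (.seq s (.whileS e s))⟩,
       ⟨{eqFF σ e}, [.state σ], none⟩}
  | .seq r s => {ct | ∃ ct' ∈ valS σ r, ct = ⟨ct'.pc, ct'.tr, seqK ct'.k s⟩}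

/-- Local evaluation of continuations; the empty continuation evaluates to
the empty set of traces. -/
def valC (σ : SymState) : Option Stmt → Set CTrace
  | none => ∅
  | some s => valS σ s

/-- The semantic chop `τ₁ ∗∗ τ₂` on finite traces. -/
def chopL (τ₁ τ₂ : List TElem) : List TElem := τ₁.dropLast ++ τ₂

/-- Definedness of the semantic chop: `τ₁` ends with a state that is extended
by the first state of `τ₂`. -/
def ChopDefined (τ₁ τ₂ : List TElem) : Prop :=
  ∃ σ σ', τ₁.getLast? = some (.state σ) ∧ τ₂.head? = some (.state σ') ∧
    stateExtends σ σ'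

/-- Chop of a finite trace with a possibly infinite continuation trace. -/
def chopT (l : List TElem) (t : Trace) : Trace :=
  fun n => if n < l.length - 1 then l[n]? else t (n - (l.length - 1))

/-- A configuration of the composition rules: a finite (concrete) trace
together with a continuation. -/
abbrev Config := List TElem × Option Stmt

/-- The composition rule for WHILE: `(sh, K(s)) → (sh ∗∗ τ, K(s'))` whenever
`last(sh) = σ`, `pc ▷ τ·K(s') ∈ val_σ(s)` and `pc` is consistent. -/
def Step (c c' : Config) : Prop :=
  ∃ σ ct, c.1.getLast? = some (TElem.state σ) ∧
    ct ∈ valC σ c.2 ∧ pcConsistent ct.pc ∧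
    c' = (chopL c.1 ct.tr, ct.k)

/-- `t` is the limit of the growing sequence of finite traces `f`. -/
def IsLimit (f : ℕ → List TElem) (t : Trace) : Prop :=
  ∀ n, ∃ N, ∀ i, N ≤ i → (f i)[n]? = t n

/-- Global trace semantics `traces(s, σ)`: traces of maximal sequences of
applications of the composition rule starting at `(⟨σ⟩, K(s))`; for finite
maximal sequences (ending with the empty continuation) the resulting finite
trace, for infinite sequences the limit. -/
def tracesOf (s : Stmt) (σ : SymState) : Set Trace :=
  {t | (∃ sh : List TElem,
          Relation.ReflTransGen Step ([TElem.state σ], some s) (sh, none) ∧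
          t = ofList sh) ∨
       (∃ run : ℕ → Config, run 0 = ([TElem.state σ], some s) ∧
          (∀ n, Step (run n) (run (n + 1))) ∧
          IsLimit (fun n => (run n).1) t)}

open Classical in
/-- `σ[V ↦ ∗]`: bind every variable of `V` to `∗`. -/
noncomputable def updStarSet (σ : SymState) (V : Set Var) : SymState :=
  fun x => if x ∈ V then some Sexp.star else σ x

/-- The event trace `evTrio_V(σ, ē)` of length three: the state `σ`, the
event `ev(val_{σ'}(ē))`, and the state `σ' = σ[V ↦ ∗]`. -/
noncomputable def evTrio (σ : SymState) (es : List Exp) (V : Set Var) :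
    List TElem :=
  [.state σ, .event (es.map (evalE (updStarSet σ V))), .state (updStarSet σ V)]
/-- The variables of a continuation. -/
def contVars : Option Stmt → Set Var
  | none => ∅
  | some s => stmtVars s

/-
A local step from a state σ either repeats σ or appends `σ[x ↦ val_σ(e)]` with
`vars(e) ⊆ vars(s)`; when σ is valued and defines `vars(s)`, `val_σ(e)` is a value, so the new
state is valued and the domain only grows. The continuation of a local step mentions no
variables beyond `vars(s)`. Hence "all states are valued and the last one defines the variables
of the continuation" is invariant under the composition rule, and valued states are concrete.
-/

lemma ValuedState.concreteState {σ : SymState} (hσ : ValuedState σ) : ConcreteState σ := by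
  refine ⟨fun y se hse => ?_, ?_, hσ⟩
  · obtain ⟨v, rfl⟩ := hσ y se hse
    simp [Sexp.vars, Exp.vars]
  · refine Set.eq_empty_iff_forall_notMem.mpr fun x (hx : σ x = some .star) => ?_
    obtain ⟨v, hv⟩ := hσ x _ hx
    cases hv

lemma valuedState_updState {σ : SymState} (hσ : ValuedState σ) (x : Var) (v : Val) :
    ValuedState (updState σ x (.exp (.val v))) := by
  intro y se hse
  unfold updState at hse
  split_ifs at hse
  · exact ⟨v, (Option.some.inj hse).symm⟩
  · exact hσ y se hse

lemma domS_subset_domS_updState (σ : SymState) (x : Var) (se : Sexp) :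
    domS σ ⊆ domS (updState σ x se) := by
  intro y hy
  by_cases hyx : y = x <;> simp_all [domS, updState]

lemma exists_evalE_eq_val {σ : SymState} (hσ : ValuedState σ) :
    ∀ e : Exp, e.vars ⊆ domS σ → ∃ v, evalE σ e = .val v
  | .var x, h => by
      obtain ⟨se, hse⟩ := Option.isSome_iff_exists.mp (h (Set.mem_singleton x))
      obtain ⟨v, rfl⟩ := hσ x se hse
      exact ⟨v, by simp [evalE, hse]⟩
  | .val v, _ => ⟨v, rfl⟩
  | .op o a b, h => by
      obtain ⟨va, ha⟩ := exists_evalE_eq_val hσ a (Set.union_subset_iff.mp h).1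
      obtain ⟨vb, hb⟩ := exists_evalE_eq_val hσ b (Set.union_subset_iff.mp h).2
      exact ⟨applyOp o va vb, by simp [evalE, ha, hb]⟩

lemma contVars_subset_of_mem_valS {σ : SymState} {s : Stmt} {ct : CTrace}
    (h : ct ∈ valS σ s) : contVars ct.k ⊆ stmtVars s := by
  induction s generalizing ct with
  | skip | assign => simp_all [valS, contVars]
  | ifS e s => rcases h with rfl | rfl <;> simp [contVars, stmtVars]
  | whileS e s =>
      rcases h with rfl | rfl
      · simp only [contVars, stmtVars]
        exact Set.union_subset Set.subset_union_right subset_rfl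
      · simp [contVars]
  | seq r s ihr =>
      obtain ⟨ct', hct', rfl⟩ := h
      have hr := ihr hct'
      cases hk : ct'.k with
      | none => simp [seqK, contVars, stmtVars]
      | some r' =>
          rw [hk] at hr
          simpa [seqK, contVars, stmtVars] using Set.union_subset_union_left _ hr

lemma tr_eq_of_mem_valS {σ : SymState} {s : Stmt} {ct : CTrace} (h : ct ∈ valS σ s) :
    ct.tr = [.state σ] ∨
      ∃ x e, e.vars ⊆ stmtVars s ∧
        ct.tr = [.state σ, .state (updState σ x (.exp (evalE σ e)))] := by
  induction s generalizing ct with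
  | skip => simp_all [valS]
  | assign x e =>
      simp only [valS, Set.mem_singleton_iff] at h
      exact .inr ⟨x, e, Set.subset_union_right, by rw [h]⟩
  | ifS | whileS => rcases h with rfl | rfl <;> simp
  | seq r s ihr =>
      obtain ⟨ct', hct', rfl⟩ := h
      obtain h | ⟨x, e, he, h⟩ := ihr hct'
      · exact .inl h
      · exact .inr ⟨x, e, he.trans Set.subset_union_left, h⟩

def ValuedConfig (c : Config) : Prop :=
  (∀ σ ∈ listStates c.1, ValuedState σ) ∧
    ∃ σl, c.1.getLast? = some (.state σl) ∧ contVars c.2 ⊆ domS σl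

lemma valuedConfig_of_mem_valS {σ : SymState} {s : Stmt} {ct : CTrace}
    (hσ : ValuedState σ) (hs : stmtVars s ⊆ domS σ) (h : ct ∈ valS σ s) :
    ValuedConfig (ct.tr, ct.k) := by
  have hk := contVars_subset_of_mem_valS h
  obtain htr | ⟨x, e, he, htr⟩ := tr_eq_of_mem_valS h
  · refine ⟨?_, σ, by simp [htr], hk.trans hs⟩
    intro σ' hσ'
    obtain rfl : σ' = σ := by simpa [htr, listStates] using hσ'
    exact hσ
  · obtain ⟨v, hv⟩ := exists_evalE_eq_val hσ e (he.trans hs)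
    rw [hv] at htr
    refine ⟨?_, updState σ x (.exp (.val v)), by simp [htr],
      (hk.trans hs).trans (domS_subset_domS_updState σ x _)⟩
    intro σ' hσ'
    obtain rfl | rfl : σ' = σ ∨ σ' = updState σ x (.exp (.val v)) := by
      simpa [htr, listStates] using hσ'
    exacts [hσ, valuedState_updState hσ x v]

lemma listStates_chopL_subset (l t : List TElem) :
    listStates (chopL l t) ⊆ listStates l ∪ listStates t := by
  intro σ h
  obtain h | h := List.mem_append.mp (show TElem.state σ ∈ l.dropLast ++ t from h)
  exacts [.inl (List.mem_of_mem_dropLast h), .inr h]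

lemma ValuedConfig.step {c c' : Config} (hc : ValuedConfig c) (h : Step c c') :
    ValuedConfig c' := by
  obtain ⟨hstates, σl, hlast, hvars⟩ := hc
  obtain ⟨σ, ct, hlast', hct, -, rfl⟩ := h
  obtain rfl : σ = σl := by simpa [hlast] using hlast'.symm
  obtain ⟨s, hk⟩ := Option.ne_none_iff_exists'.mp fun hk : c.2 = none => by simp [hk, valC] at hct
  rw [hk] at hct hvars
  have hσ : ValuedState σ := hstates σ (List.mem_of_getLast? hlast)
  obtain ⟨hstates', σl', hlast', hvars'⟩ := valuedConfig_of_mem_valS hσ hvars hct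
  have hne : ct.tr ≠ [] := by rintro h; simp [h] at hlast'
  refine ⟨fun σ' hσ' => ?_, σl', ?_, hvars'⟩
  · exact (listStates_chopL_subset _ _ hσ').elim (hstates σ') (hstates' σ')
  · rwa [chopL, List.getLast?_append_of_ne_nil _ hne]

lemma ValuedConfig.of_reflTransGen {c c' : Config} (hc : ValuedConfig c)
    (h : Relation.ReflTransGen Step c c') : ValuedConfig c' := by
  induction h with
  | refl => exact hc
  | tail _ hstep ih => exact ih.step hstep

/-- Concreteness of reachable global traces for WHILE: every
configuration `(sh', K(s'))` reachable from `(⟨σ⟩, K(s))` by the composition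
rule has a concrete trace `sh'` (all its states are concrete well-formed
states), and `vars(s') ⊆ dom(last(sh'))`. -/
theorem reachable_configurations_concrete (σ : SymState)
    (hσ : ConcreteState σ) (s : Stmt) (hs : stmtVars s ⊆ domS σ) :
    ∀ sh' k',
      Relation.ReflTransGen Step ([TElem.state σ], some s) (sh', k') →
      (∀ σ'' ∈ listStates sh', ConcreteState σ'') ∧
      ∃ σl, sh'.getLast? = some (.state σl) ∧ contVars k' ⊆ domS σl := by
  intro sh' k' h
  have hinit : ValuedConfig ([.state σ], some s) := by
    refine ⟨fun σ' hσ' => ?_, σ, rfl, hs⟩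
    obtain rfl : σ' = σ := by simpa [listStates] using hσ'
    exact hσ.2.2
  obtain ⟨hstates, σl, hlast, hvars⟩ := hinit.of_reflTransGen h
  exact ⟨fun σ' h => (hstates σ' h).concreteState, σl, hlast, hvars⟩
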